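/- Let ψ be a SAT instance with m clauses over n > 2 variables. Then: ψ is satisfiable if and only if min_synch(A(ψ)) ≤ n + 2. Moreover if ψ is satisfiable then min_synch(A(ψ)) ≤ n + 2, and if ψ is unsatisfiable then min_synch(A(ψ)) > 2(n − 1). -/

import Mathlib

/-- The three-letter alphabet {a, b, c}. -/
inductive Letter3 where
  | a | b | c
deriving DecidableEq

/-- Extension of a transition function to words (left-to-right action). -/
def runW {Q A : Type*} (δ : Q → A → Q) : Q → List A → Q
  | q, [] => q
  | q, x :: w => runW δ (δ q x) w

/-- States of Berlinkov's automaton A(ψ) for a SAT instance with m clauses and n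
variables.  `q i j` encodes q_{i+1,j+1} (so `q ⟨m⟩ ⟨n⟩` is the state z₁),
`p i j` encodes p_{i+1,j+1}, and `z0` is the zero state. -/
inductive St (m n : ℕ) where
  | q : Fin (m + 1) → Fin (n + 1) → St m n
  | p : Fin (m + 1) → Fin (n + 1) → St m n
  | z0 : St m n
deriving DecidableEq

/-- The transition function of Berlinkov's automaton A(ψ).  `pos i j` means the
literal x_{j+1} occurs in clause c_{i+1}; `neg i j` means ¬x_{j+1} occurs there. -/
def St.delta {m n : ℕ} (pos neg : Fin m → Fin n → Bool) : St m n → Letter3 → St m n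
  | .q i j, .a =>
      if hj : (j : ℕ) < n then
        if hi : (i : ℕ) < m then
          if pos ⟨i, hi⟩ ⟨j, hj⟩ then .z0 else .q i ⟨(j : ℕ) + 1, by omega⟩
        else .q i ⟨(j : ℕ) + 1, by omega⟩
      else if (i : ℕ) < m then .z0 else .q i ⟨0, by omega⟩
  | .q i j, .b =>
      if hj : (j : ℕ) < n then
        if hi : (i : ℕ) < m then
          if neg ⟨i, hi⟩ ⟨j, hj⟩ then .z0 else .q i ⟨(j : ℕ) + 1, by omega⟩
        else .q i ⟨(j : ℕ) + 1, by omega⟩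
      else if (i : ℕ) < m then .z0 else .q i ⟨0, by omega⟩
  | .q i j, .c =>
      if (j : ℕ) < n then .q i ⟨0, by omega⟩
      else if (i : ℕ) < m then .q ⟨m, by omega⟩ ⟨0, by omega⟩ else .z0
  | .p i j, x =>
      if hj : (j : ℕ) < n then .p i ⟨(j : ℕ) + 1, by omega⟩
      else match x with
        | .c => .q i ⟨0, by omega⟩
        | _ => .z0
  | .z0, _ => .z0

/-- Clause c_{i+1} is satisfied by the truth assignment τ. -/
def clauseSat {m n : ℕ} (pos neg : Fin m → Fin n → Bool) (τ : Fin n → Bool) (i : Fin m) : Prop :=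
  ∃ j : Fin n, (pos i j = true ∧ τ j = true) ∨ (neg i j = true ∧ τ j = false)

/-- The word v(τ) ∈ {a,b}ⁿ encoding a truth assignment. -/
def encWord {n : ℕ} (τ : Fin n → Bool) : List Letter3 :=
  List.ofFn fun j : Fin n => if τ j then Letter3.a else Letter3.b

/-!
If τ satisfies ψ, the word `c v(τ) c` synchronizes: the first `c` sends every state to `z0`, to
the start `q i 0` of a row, or into a `p`-chain at column ≥ 1; then `v(τ)` kills every clause row
and runs every `p`-state off its chain, and the last `c` kills the row of z₁.

Conversely, the row of z₁ counts consecutive letters from {a, b}; it is reset by `c` and by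
overflow, and it dies only on a `c` read at count `n`. So a synchronizing word contains a block
`x c` with `x ∈ {a,b}ⁿ`, starting at the beginning of the word, after a `c`, or after more than `n`
letters. In the first two cases `x = v(τ)` for some τ, and the row of a clause violated by τ,
entered at the start of the block (through a `p`-chain in the second case), survives `x` and is
sent by `c` to the start of z₁'s row, which needs `n + 1` further letters. Either way the word has
length at least `2n + 2`.
-/

theorem runW_append {Q A : Type*} (δ : Q → A → Q) (q : Q) (u v : List A) :
    runW δ q (u ++ v) = runW δ (runW δ q u) v := by
  induction u generalizing q with
  | nil => rfl
  | cons x u ih => exact ih _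

theorem runW_of_absorbing {Q A : Type*} {δ : Q → A → Q} {z : Q} (hz : ∀ x, δ z x = z)
    (w : List A) : runW δ z w = z := by
  induction w with
  | nil => rfl
  | cons x w ih => rw [runW, hz, ih]

theorem length_encWord {n : ℕ} (τ : Fin n → Bool) : (encWord τ).length = n :=
  List.length_ofFn

theorem c_notMem_encWord {n : ℕ} (τ : Fin n → Bool) : Letter3.c ∉ encWord τ := by
  simp only [encWord, List.mem_ofFn, not_exists]
  intro j
  split <;> simp

theorem exists_encWord_eq {n : ℕ} (x : List Letter3) (hx : Letter3.c ∉ x) (hn : x.length = n) :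
    ∃ τ : Fin n → Bool, encWord τ = x := by
  subst hn
  refine ⟨fun j => x[j] = .a, List.ext_getElem (length_encWord _) fun k h _ => ?_⟩
  have hk : x[k] ≠ .c := fun h' => hx (h' ▸ List.getElem_mem _)
  have decode : ∀ y : Letter3, y ≠ .c → (if y = .a then Letter3.a else .b) = y := by
    intro y; cases y <;> simp
  simpa [encWord] using decode _ hk

namespace St

variable {m n : ℕ} (pos neg : Fin m → Fin n → Bool)
local notation "δ" => St.delta pos neg

theorem runW_z0 (w : List Letter3) : runW δ (z0 : St m n) w = z0 :=
  runW_of_absorbing (fun _ => rfl) w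

theorem runW_p (i : Fin (m + 1)) (u : List Letter3) (j : ℕ) (h : j + u.length ≤ n) :
    runW δ (p i ⟨j, by omega⟩) u = p i ⟨j + u.length, by omega⟩ := by
  induction u generalizing j with
  | nil => rfl
  | cons x u ih =>
    simp only [List.length_cons] at h ⊢
    have hj : j < n := by omega
    rw [runW, show δ (p i ⟨j, by omega⟩) x = p i ⟨j + 1, by omega⟩ by simp [St.delta, hj],
      ih (j + 1) (by omega)]
    congr 2
    omega

theorem runW_p_eq_z0 (i : Fin (m + 1)) (u : List Letter3) (hu : Letter3.c ∉ u) (j : ℕ)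
    (hj : j ≤ n) (hlen : n < j + u.length) : runW δ (p i ⟨j, by omega⟩) u = z0 := by
  induction u generalizing j with
  | nil => simp only [List.length_nil, Nat.add_zero] at hlen; omega
  | cons x u ih =>
    simp only [List.mem_cons, not_or] at hu
    simp only [List.length_cons] at hlen
    by_cases hjn : j < n
    · rw [runW, show δ (p i ⟨j, by omega⟩) x = p i ⟨j + 1, by omega⟩ by simp [St.delta, hjn]]
      exact ih hu.2 (j + 1) hjn (by omega)
    · have : δ (p i ⟨j, by omega⟩) x = z0 := by cases x <;> simp_all [St.delta]
      rw [runW, this, runW_z0]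

theorem delta_q_encLetter (τ : Fin n → Bool) (i : Fin (m + 1)) (j : Fin n) :
    δ (q i j.castSucc) (if τ j then .a else .b) =
      if ∃ hi : (i : ℕ) < m,
          (pos ⟨i, hi⟩ j = true ∧ τ j = true) ∨ (neg ⟨i, hi⟩ j = true ∧ τ j = false)
      then z0 else q i j.succ := by
  by_cases hi : (i : ℕ) < m <;> cases τ j <;> simp [St.delta, hi, Fin.succ]

theorem runW_q_take_encWord (τ : Fin n → Bool) (i : Fin (m + 1)) (k : ℕ) (hk : k ≤ n) :
    runW δ (q i 0) ((encWord τ).take k) =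
      if ∃ (hi : (i : ℕ) < m) (j : Fin n), (j : ℕ) < k ∧
          ((pos ⟨i, hi⟩ j = true ∧ τ j = true) ∨ (neg ⟨i, hi⟩ j = true ∧ τ j = false))
      then z0 else q i ⟨k, by omega⟩ := by
  induction k with
  | zero => simp [runW]
  | succ k ih =>
    have hkn : k < n := by omega
    have hlast : (encWord τ)[k]? = some (if τ ⟨k, hkn⟩ then .a else .b) := by
      simp [encWord, hkn]
    rw [List.take_add_one, hlast, Option.toList_some, runW_append, ih (by omega)]
    by_cases hprev : ∃ (hi : (i : ℕ) < m) (j : Fin n), (j : ℕ) < k ∧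
        ((pos ⟨i, hi⟩ j = true ∧ τ j = true) ∨ (neg ⟨i, hi⟩ j = true ∧ τ j = false))
    · obtain ⟨hi, j, hj, hlit⟩ := hprev
      rw [if_pos ⟨hi, j, hj, hlit⟩, runW_z0, if_pos ⟨hi, j, by omega, hlit⟩]
    · rw [if_neg hprev, runW, runW,
        show (⟨k, _⟩ : Fin (n + 1)) = (⟨k, hkn⟩ : Fin n).castSucc from rfl, delta_q_encLetter]
      congr 1
      apply propext
      constructor
      · rintro ⟨hi, hlit⟩
        exact ⟨hi, ⟨k, hkn⟩, by simp, hlit⟩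
      · rintro ⟨hi, j, hj, hlit⟩
        obtain rfl : j = ⟨k, hkn⟩ := Fin.ext <| by
          by_contra hjk
          exact hprev ⟨hi, j, by simp only at hjk; omega, hlit⟩
        exact ⟨hi, hlit⟩

open Classical in
theorem runW_q_encWord (τ : Fin n → Bool) (i : Fin (m + 1)) :
    runW δ (q i 0) (encWord τ) =
      if ∃ hi : (i : ℕ) < m, clauseSat pos neg τ ⟨i, hi⟩ then z0 else q i (Fin.last n) := by
  have h := runW_q_take_encWord pos neg τ i n le_rfl
  rw [List.take_of_length_le (length_encWord τ).le] at h
  simp only [h, Fin.is_lt, true_and]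
  exact if_congr Iff.rfl rfl rfl

theorem runW_q_encWord_c_of_sat (τ : Fin n → Bool) (hτ : ∀ i, clauseSat pos neg τ i)
    (i : Fin (m + 1)) : runW δ (q i 0) (encWord τ ++ [.c]) = z0 := by
  rw [runW_append, runW_q_encWord]
  by_cases hi : (i : ℕ) < m
  · rw [if_pos ⟨hi, hτ _⟩, runW_z0]
  · rw [if_neg fun ⟨h, _⟩ => hi h]
    simp [runW, St.delta, hi]

theorem delta_c_cases (s : St m n) :
    δ s .c = z0 ∨ (∃ i, δ s .c = q i 0) ∨
      ∃ (i : Fin (m + 1)) (j : ℕ) (_ : 0 < j) (hjn : j ≤ n), δ s .c = p i ⟨j, by omega⟩ := by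
  rcases s with ⟨i, j⟩ | ⟨i, j⟩ | _
  · by_cases hj : (j : ℕ) < n
    · exact .inr (.inl ⟨i, by simp [St.delta, hj]⟩)
    · by_cases hi : (i : ℕ) < m
      · exact .inr (.inl ⟨Fin.last m, by simp [St.delta, hj, hi, Fin.last]⟩)
      · exact .inl (by simp [St.delta, hj, hi])
  · by_cases hj : (j : ℕ) < n
    · exact .inr (.inr ⟨i, j + 1, by omega, by omega, by simp [St.delta, hj]⟩)
    · exact .inr (.inl ⟨i, by simp [St.delta, hj]⟩)
  · exact .inl rfl

theorem runW_c_encWord_c_of_sat (τ : Fin n → Bool) (hτ : ∀ i, clauseSat pos neg τ i)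
    (s : St m n) : runW δ s (.c :: (encWord τ ++ [.c])) = z0 := by
  rw [runW]
  rcases delta_c_cases pos neg s with h | ⟨i, h⟩ | ⟨i, j, hj, hjn, h⟩ <;> rw [h]
  · exact runW_z0 pos neg _
  · exact runW_q_encWord_c_of_sat pos neg τ hτ i
  · rw [runW_append, runW_p_eq_z0 pos neg i _ (c_notMem_encWord τ) j hjn
      (by rw [length_encWord]; omega), runW_z0]

theorem runW_q_encWord_c_of_not_clauseSat (τ : Fin n → Bool) (i : Fin m)
    (hi : ¬clauseSat pos neg τ i) (v : List Letter3) :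
    runW δ (q i.castSucc 0) (encWord τ ++ .c :: v) = runW δ (q (Fin.last m) 0) v := by
  rw [runW_append, runW_q_encWord, if_neg fun ⟨_, h⟩ => hi h]
  simp [runW, St.delta, Fin.last]

theorem delta_qLast_of_lt (j : ℕ) (hj : j < n) (x : Letter3) :
    δ (q (Fin.last m) ⟨j, by omega⟩) x =
      if x = .c then q (Fin.last m) 0 else q (Fin.last m) ⟨j + 1, by omega⟩ := by
  cases x <;> simp [St.delta, hj]

theorem delta_qLast_last (x : Letter3) :
    δ (q (Fin.last m) (Fin.last n)) x = if x = .c then z0 else q (Fin.last m) 0 := by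
  cases x <;> simp [St.delta]

/-- The first disjunct is a kill before any reset of the counter; in the second, the count of the
block starts after a `c` or after an overflow, which takes more than `n - j` letters. -/
theorem exists_block_of_runW_qLast (w : List Letter3) (j : ℕ) (hj : j ≤ n)
    (h : runW δ (q (Fin.last m) ⟨j, by omega⟩) w = z0) :
    ∃ u x v, w = u ++ (x ++ .c :: v) ∧ .c ∉ x ∧
      ((u = [] ∧ j + x.length = n) ∨
        (x.length = n ∧ ((∃ u', u = u' ++ [.c]) ∨ n - j < u.length))) := by
  induction w generalizing j with
  | nil => simp [runW] at h
  | cons y w ih =>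
    rw [runW] at h
    by_cases hjn : j < n
    · rw [delta_qLast_of_lt pos neg j hjn] at h
      by_cases hy : y = .c
      · rw [if_pos hy] at h
        obtain ⟨u, x, v, rfl, hx, hu⟩ := ih 0 (by omega) h
        subst hy
        refine ⟨.c :: u, x, v, rfl, hx, .inr ⟨by omega, ?_⟩⟩
        rcases hu with ⟨rfl, -⟩ | ⟨-, ⟨u', rfl⟩ | hu⟩
        · exact .inl ⟨[], rfl⟩
        · exact .inl ⟨.c :: u', rfl⟩
        · exact .inr (by simp only [List.length_cons]; omega)
      · rw [if_neg hy] at h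
        obtain ⟨u, x, v, rfl, hx, hu⟩ := ih (j + 1) hjn h
        rcases hu with ⟨rfl, hxn⟩ | ⟨hxn, hu⟩
        · refine ⟨[], y :: x, v, rfl, by simp [hx, Ne.symm hy], .inl ⟨rfl, ?_⟩⟩
          simp only [List.length_cons]
          omega
        · refine ⟨y :: u, x, v, rfl, hx, .inr ⟨hxn, ?_⟩⟩
          rcases hu with ⟨u', rfl⟩ | hu
          · exact .inl ⟨y :: u', rfl⟩
          · exact .inr (by simp only [List.length_cons]; omega)
    · rw [show (⟨j, _⟩ : Fin (n + 1)) = Fin.last n from Fin.ext (show j = n by omega),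
        delta_qLast_last] at h
      by_cases hy : y = .c
      · subst hy
        exact ⟨[], [], w, rfl, by simp, .inl ⟨rfl, by simp only [List.length_nil]; omega⟩⟩
      · rw [if_neg hy] at h
        obtain ⟨u, x, v, rfl, hx, hu⟩ := ih 0 (by omega) h
        refine ⟨y :: u, x, v, rfl, hx, .inr ⟨by omega, .inr ?_⟩⟩
        simp only [List.length_cons]
        omega

theorem exists_block_of_runW_qLast_zero (w : List Letter3)
    (h : runW δ (q (Fin.last m) 0) w = z0) :
    ∃ u x v, w = u ++ (x ++ .c :: v) ∧ .c ∉ x ∧ x.length = n ∧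
      (u = [] ∨ (∃ u', u = u' ++ [.c]) ∨ n < u.length) := by
  obtain ⟨u, x, v, hw, hx, hu⟩ := exists_block_of_runW_qLast pos neg w 0 (Nat.zero_le n) h
  refine ⟨u, x, v, hw, hx, ?_⟩
  rcases hu with ⟨rfl, hxn⟩ | ⟨hxn, hu⟩
  · exact ⟨by omega, .inl rfl⟩
  · exact ⟨hxn, .inr (by simpa using hu)⟩

theorem lt_length_of_runW_qLast (w : List Letter3) (h : runW δ (q (Fin.last m) 0) w = z0) :
    n < w.length := by
  obtain ⟨u, x, v, rfl, -, hxn, -⟩ := exists_block_of_runW_qLast_zero pos neg w h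
  simp only [List.length_append, List.length_cons]
  omega

theorem exists_runW_eq_q_zero (i : Fin (m + 1)) (u : List Letter3)
    (hu : u = [] ∨ ∃ u', u = u' ++ [.c]) (hlen : u.length ≤ n + 1) :
    ∃ s, runW δ s u = q i 0 := by
  rcases hu with rfl | ⟨u', rfl⟩
  · exact ⟨q i 0, rfl⟩
  · simp only [List.length_append, List.length_singleton] at hlen
    refine ⟨p i ⟨n - u'.length, by omega⟩, ?_⟩
    rw [runW_append, runW_p pos neg i u' _ (by omega),
      show (⟨n - u'.length + u'.length, _⟩ : Fin (n + 1)) = Fin.last n from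
        Fin.ext (show n - u'.length + u'.length = n by omega)]
    simp [runW, St.delta]

theorem le_length_of_unsat (huns : ∀ τ, ∃ i, ¬clauseSat pos neg τ i) (w : List Letter3)
    (hw : ∀ s, runW δ s w = z0) : 2 * n + 2 ≤ w.length := by
  obtain ⟨u, x, v, rfl, hxc, hxn, hu⟩ := exists_block_of_runW_qLast_zero pos neg w (hw _)
  obtain ⟨τ, rfl⟩ := exists_encWord_eq x hxc hxn
  simp only [List.length_append, List.length_cons, length_encWord]
  by_cases hlong : n < u.length
  · omega
  obtain ⟨i, hi⟩ := huns τ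
  obtain ⟨s, hs⟩ := exists_runW_eq_q_zero pos neg i.castSucc u
    (hu.imp_right (Or.resolve_right · hlong)) (by omega)
  have hv := hw s
  rw [runW_append, hs, runW_q_encWord_c_of_not_clauseSat pos neg τ i hi] at hv
  have := lt_length_of_runW_qLast pos neg v hv
  omega

end St

/-- For n > 2: ψ is satisfiable iff A(ψ) has a synchronizing word of length at
most n+2; moreover satisfiability gives a synchronizing word of length ≤ n+2,
and unsatisfiability forces every synchronizing word to be longer than 2(n−1). -/
theorem sat_iff_short_sync
    {m n : ℕ} (hn : 2 < n) (pos neg : Fin m → Fin n → Bool) :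
    ((∃ τ : Fin n → Bool, ∀ i : Fin m, clauseSat pos neg τ i) ↔
      ∃ w : List Letter3, (∃ p : St m n, ∀ s : St m n, runW (St.delta pos neg) s w = p) ∧
        w.length ≤ n + 2) ∧
    ((∃ τ : Fin n → Bool, ∀ i : Fin m, clauseSat pos neg τ i) →
      ∃ w : List Letter3, (∃ p : St m n, ∀ s : St m n, runW (St.delta pos neg) s w = p) ∧
        w.length ≤ n + 2) ∧
    ((∀ τ : Fin n → Bool, ∃ i : Fin m, ¬ clauseSat pos neg τ i) →
      ∀ w : List Letter3,
        (∃ p : St m n, ∀ s : St m n, runW (St.delta pos neg) s w = p) →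
        2 * (n - 1) < w.length) := by
  have hshort : (∃ τ : Fin n → Bool, ∀ i, clauseSat pos neg τ i) →
      ∃ w : List Letter3, (∃ p : St m n, ∀ s, runW (St.delta pos neg) s w = p) ∧
        w.length ≤ n + 2 := by
    rintro ⟨τ, hτ⟩
    exact ⟨.c :: (encWord τ ++ [.c]), ⟨.z0, St.runW_c_encWord_c_of_sat pos neg τ hτ⟩,
      by simp [length_encWord]⟩
  have hlong : (∀ τ : Fin n → Bool, ∃ i, ¬clauseSat pos neg τ i) → ∀ w : List Letter3,
      (∃ p : St m n, ∀ s, runW (St.delta pos neg) s w = p) → 2 * n + 2 ≤ w.length := by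
    rintro huns w ⟨p, hp⟩
    obtain rfl : p = .z0 := (hp .z0).symm.trans (St.runW_z0 pos neg w)
    exact St.le_length_of_unsat pos neg huns w hp
  refine ⟨⟨hshort, fun ⟨w, hw, hlen⟩ => ?_⟩, hshort, fun huns w hw => ?_⟩
  · by_contra hsat
    simp only [not_exists, not_forall] at hsat
    have := hlong hsat w hw
    omega
  · have := hlong huns w hw
    omega
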